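/- arXiv:1610.06162 — 3 statements merged into one kernel-verified Lean document; each statement's English description precedes it below -/
import Mathlib

section
/- Let d be a 1-bounded pseudometric on a countable set S, let f: S^n → S be an n-ary operation, and let z: [0,1]^n → [0,1] be a concave function such that d(f(t_1,...,t_n), f(t'_1,...,t'_n)) ≤ z(d(t_1,t'_1),...,d(t_n,t'_n)) for all t_i, t'_i ∈ S. Then for all probability distributions π_1,π'_1,...,π_n,π'_n on S with finite support, K(d)(f*(π_1,...,π_n), f*(π'_1,...,π'_n)) ≤ z(K(d)(π_1,π'_1),...,K(d)(π_n,π'_n)), where f* denotes the pushforward product distribution defined by f*(π_1,...,π_n)(f(t_1,...,t_n)) = Π_i π_i(t_i) when f is injective. -/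
/-- A 1-bounded pseudometric on `S`. -/
structure PseudoMet (S : Type*) where
  d : S → S → ℝ
  nonneg : ∀ s t, 0 ≤ d s t
  le_one : ∀ s t, d s t ≤ 1
  refl : ∀ s, d s s = 0
  symm : ∀ s t, d s t = d t s
  triangle : ∀ s t u, d s u ≤ d s t + d t u

/-- A probability distribution on a countable set `S`. -/
structure PDist (S : Type*) where
  p : S → ℝ
  nonneg : ∀ s, 0 ≤ p s
  sum_one : ∑' s, p s = 1

/-- `ω` is a coupling (matching) of `π` and `π'`. -/
def IsCoupling {S : Type*} (ω : PDist (S × S)) (π π' : PDist S) : Prop :=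
  (∀ s, ∑' t, ω.p (s, t) = π.p s) ∧ (∀ t, ∑' s, ω.p (s, t) = π'.p t)

/-- The Kantorovich lifting of a (pseudo)metric `d` to distributions. -/
noncomputable def Kant {S : Type*} (d : S → S → ℝ) (π π' : PDist S) : ℝ :=
  sInf {r | ∃ ω : PDist (S × S), IsCoupling ω π π' ∧
    r = ∑' q : S × S, d q.1 q.2 * ω.p q}

private lemma pdist_summable {S : Type*} (π : PDist S) : Summable π.p := by
  by_contra h
  have h0 := tsum_eq_zero_of_not_summable h
  rw [π.sum_one] at h0
  norm_num at h0

private lemma pdist_le_one {S : Type*} (π : PDist S) (s : S) : π.p s ≤ 1 := by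
  have h := Summable.le_tsum (pdist_summable π) s (fun j _ => π.nonneg j)
  rwa [π.sum_one] at h

private lemma coupling_zero {S : Type*} {π π' : PDist S} {ω : PDist (S × S)}
    (h : IsCoupling ω π π') {q : S × S} (hq : π.p q.1 = 0 ∨ π'.p q.2 = 0) :
    ω.p q = 0 := by
  obtain ⟨s, t⟩ := q
  have hsum : Summable ω.p := pdist_summable ω
  rcases hq with h0 | h0
  · have h0' : π.p s = 0 := h0
    have hs : Summable (fun t' => ω.p (s, t')) := hsum.prod_factor s
    have hle := Summable.le_tsum hs t (fun j _ => ω.nonneg _)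
    rw [h.1 s, h0'] at hle
    exact le_antisymm hle (ω.nonneg _)
  · have h0' : π'.p t = 0 := h0
    have hi : Function.Injective (fun s' : S => (s', t)) := fun a b hab => congrArg Prod.fst hab
    have hs : Summable (fun s' => ω.p (s', t)) := hsum.comp_injective hi
    have hle := Summable.le_tsum hs s (fun j _ => ω.nonneg _)
    rw [h.2 t, h0'] at hle
    exact le_antisymm hle (ω.nonneg _)

private lemma kant_attained {S : Type*} (D : PseudoMet S) (π π' : PDist S)
    (hA : (Function.support π.p).Finite) (hB : (Function.support π'.p).Finite) :
    ∃ ω : PDist (S × S), IsCoupling ω π π' ∧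
      (∑' q : S × S, D.d q.1 q.2 * ω.p q) = Kant D.d π π' := by
  classical
  set A : Finset S := hA.toFinset with hAdef
  set B : Finset S := hB.toFinset with hBdef
  have hπ0 : ∀ s ∉ A, π.p s = 0 := by
    intro s hs; by_contra h; exact hs (hA.mem_toFinset.mpr h)
  have hπ'0 : ∀ t ∉ B, π'.p t = 0 := by
    intro t ht; by_contra h; exact ht (hB.mem_toFinset.mpr h)
  have hπsum : ∑ s ∈ A, π.p s = 1 := by rw [← tsum_eq_sum (L := SummationFilter.unconditional _) hπ0]; exact π.sum_one
  have hπ'sum : ∑ t ∈ B, π'.p t = 1 := by rw [← tsum_eq_sum (L := SummationFilter.unconditional _) hπ'0]; exact π'.sum_one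
  set C : Set (S × S → ℝ) := {g | (∀ q, g q ∈ Set.Icc (0:ℝ) 1) ∧
    (∀ q : S × S, q.1 ∉ A ∨ q.2 ∉ B → g q = 0) ∧
    (∀ s, ∑ t ∈ B, g (s, t) = π.p s) ∧ (∀ t, ∑ s ∈ A, g (s, t) = π'.p t)} with hCdef
  set cost : (S × S → ℝ) → ℝ := fun g => ∑ q ∈ A ×ˢ B, D.d q.1 q.2 * g q with hcostdef
  have hcost_cont : Continuous cost := by
    apply continuous_finset_sum
    intro q _
    exact continuous_const.mul (continuous_apply q)
  have hclosed : IsClosed C := by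
    have e : C = (⋂ q : S × S, {g : S × S → ℝ | g q ∈ Set.Icc (0:ℝ) 1}) ∩
        ((⋂ q : S × S, {g : S × S → ℝ | q.1 ∉ A ∨ q.2 ∉ B → g q = 0}) ∩
        ((⋂ s : S, {g : S × S → ℝ | ∑ t ∈ B, g (s, t) = π.p s}) ∩
         (⋂ t : S, {g : S × S → ℝ | ∑ s ∈ A, g (s, t) = π'.p t}))) := by
      ext g
      simp only [hCdef, Set.mem_setOf_eq, Set.mem_inter_iff, Set.mem_iInter]
    rw [e]
    refine IsClosed.inter (isClosed_iInter fun q => isClosed_Icc.preimage (continuous_apply q))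
      (IsClosed.inter (isClosed_iInter fun q => ?_)
        (IsClosed.inter
          (isClosed_iInter fun s => isClosed_eq
            (continuous_finset_sum _ fun t _ => continuous_apply (s, t)) continuous_const)
          (isClosed_iInter fun t => isClosed_eq
            (continuous_finset_sum _ fun s _ => continuous_apply (s, t)) continuous_const)))
    by_cases hq : q.1 ∉ A ∨ q.2 ∉ B
    · have e2 : {g : S × S → ℝ | q.1 ∉ A ∨ q.2 ∉ B → g q = 0} = {g | g q = 0} := by
        ext g; simp [hq]
      rw [e2]
      exact isClosed_eq (continuous_apply q) continuous_const
    · have e2 : {g : S × S → ℝ | q.1 ∉ A ∨ q.2 ∉ B → g q = 0} = Set.univ := by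
        ext g; simp only [Set.mem_setOf_eq, Set.mem_univ, iff_true]
        intro hc; exact absurd hc hq
      rw [e2]
      exact isClosed_univ
  have hsub : C ⊆ Set.univ.pi fun _ : S × S => Set.Icc (0:ℝ) 1 := by
    intro g hg q _; exact hg.1 q
  have hcomp : IsCompact C := (isCompact_univ_pi fun _ => isCompact_Icc).of_isClosed_subset
    hclosed hsub
  have hprod : (fun q : S × S => π.p q.1 * π'.p q.2) ∈ C := by
    refine ⟨?_, ?_, ?_, ?_⟩
    · intro q
      exact ⟨mul_nonneg (π.nonneg _) (π'.nonneg _),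
        mul_le_one₀ (pdist_le_one π _) (π'.nonneg _) (pdist_le_one π' _)⟩
    · intro q hq
      show π.p q.1 * π'.p q.2 = 0
      rcases hq with h | h
      · rw [hπ0 _ h, zero_mul]
      · rw [hπ'0 _ h, mul_zero]
    · intro s
      show ∑ t ∈ B, π.p s * π'.p t = π.p s
      rw [← Finset.mul_sum, hπ'sum, mul_one]
    · intro t
      show ∑ s ∈ A, π.p s * π'.p t = π'.p t
      rw [← Finset.sum_mul, hπsum, one_mul]
  obtain ⟨g₀, hg₀, hmin⟩ := hcomp.exists_isMinOn ⟨_, hprod⟩ hcost_cont.continuousOn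
  have key : ∀ g : S × S → ℝ, g ∈ C → ∃ ω : PDist (S × S), ω.p = g ∧ IsCoupling ω π π' ∧
      (∑' q : S × S, D.d q.1 q.2 * ω.p q) = cost g := by
    intro g hg
    obtain ⟨hg1, hg2, hg3, hg4⟩ := hg
    have hzero : ∀ q ∉ A ×ˢ B, g q = 0 := by
      intro q hq
      apply hg2
      rw [Finset.mem_product] at hq
      tauto
    have hsum1 : ∑' q : S × S, g q = 1 := by
      rw [tsum_eq_sum hzero, Finset.sum_product]
      calc ∑ s ∈ A, ∑ t ∈ B, g (s, t) = ∑ s ∈ A, π.p s :=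
            Finset.sum_congr rfl fun s _ => hg3 s
        _ = 1 := hπsum
    refine ⟨⟨g, fun q => (hg1 q).1, hsum1⟩, rfl, ⟨?_, ?_⟩, ?_⟩
    · intro s
      have hz : ∀ t ∉ B, g (s, t) = 0 := fun t ht => hg2 _ (Or.inr ht)
      rw [tsum_eq_sum hz]
      exact hg3 s
    · intro t
      have hz : ∀ s ∉ A, (fun s => g (s, t)) s = 0 := fun s hs => hg2 _ (Or.inl hs)
      rw [tsum_eq_sum hz]
      exact hg4 t
    · have hz : ∀ q ∉ A ×ˢ B, D.d q.1 q.2 * g q = 0 := fun q hq => by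
        rw [hzero q hq, mul_zero]
      exact tsum_eq_sum hz
  obtain ⟨ω₀, hω₀p, hω₀c, hω₀cost⟩ := key g₀ hg₀
  refine ⟨ω₀, hω₀c, ?_⟩
  unfold Kant
  apply le_antisymm
  · apply le_csInf
    · exact ⟨_, ω₀, hω₀c, rfl⟩
    rintro r ⟨ω, hωc, rfl⟩
    have hmem : ω.p ∈ C := by
      refine ⟨fun q => ⟨ω.nonneg q, pdist_le_one ω q⟩, ?_, ?_, ?_⟩
      · intro q hq
        apply coupling_zero hωc
        rcases hq with h | h
        · exact Or.inl (hπ0 _ h)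
        · exact Or.inr (hπ'0 _ h)
      · intro s
        have hz : ∀ t ∉ B, ω.p (s, t) = 0 := fun t ht =>
          coupling_zero hωc (Or.inr (hπ'0 _ ht))
        rw [← tsum_eq_sum (L := SummationFilter.unconditional _) hz]
        exact hωc.1 s
      · intro t
        have hz : ∀ s ∉ A, (fun s => ω.p (s, t)) s = 0 := fun s hs =>
          coupling_zero hωc (Or.inl (hπ0 _ hs))
        rw [← tsum_eq_sum (L := SummationFilter.unconditional _) hz]
        exact hωc.2 t
    have hcosteq : (∑' q : S × S, D.d q.1 q.2 * ω.p q) = cost ω.p := by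
      have hz : ∀ q ∉ A ×ˢ B, D.d q.1 q.2 * ω.p q = 0 := by
        intro q hq
        rw [Finset.mem_product] at hq
        have h0 : ω.p q = 0 := by
          apply coupling_zero hωc
          rcases not_and_or.mp hq with h | h
          · exact Or.inl (hπ0 _ h)
          · exact Or.inr (hπ'0 _ h)
        rw [h0, mul_zero]
      exact tsum_eq_sum hz
    rw [hω₀cost, hcosteq]
    exact isMinOn_iff.mp hmin _ hmem
  · apply csInf_le
    · refine ⟨0, ?_⟩
      rintro r ⟨ω, _, rfl⟩
      exact tsum_nonneg fun q => mul_nonneg (D.nonneg _ _) (ω.nonneg _)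
    · exact ⟨ω₀, hω₀c, rfl⟩

private lemma jensen {n : ℕ} (z : (Fin n → ℝ) → ℝ)
    (hz : ∀ x y : Fin n → ℝ, (∀ i, x i ∈ Set.Icc (0:ℝ) 1) →
      (∀ i, y i ∈ Set.Icc (0:ℝ) 1) → ∀ l ∈ Set.Icc (0:ℝ) 1,
      (1 - l) * z x + l * z y ≤ z (fun i => (1 - l) * x i + l * y i))
    {ι : Type*} (s : Finset ι) :
    ∀ (w : ι → ℝ) (x : ι → Fin n → ℝ),
      (∀ j ∈ s, 0 ≤ w j) → (∑ j ∈ s, w j = 1) →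
      (∀ j ∈ s, ∀ i, x j i ∈ Set.Icc (0:ℝ) 1) →
      ∑ j ∈ s, w j * z (x j) ≤ z (fun i => ∑ j ∈ s, w j * x j i) := by
  classical
  induction s using Finset.cons_induction with
  | empty =>
    intro w x _ hsum _
    simp at hsum
  | cons a s ha IH =>
    intro w x hw hsum hx
    simp only [Finset.sum_cons] at hsum ⊢
    have hwa : 0 ≤ w a := hw a (Finset.mem_cons_self a s)
    have hwsnn : 0 ≤ ∑ j ∈ s, w j :=
      Finset.sum_nonneg fun j hj => hw j (Finset.mem_cons_of_mem hj)
    have hrest : ∑ j ∈ s, w j = 1 - w a := by linarith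
    by_cases hc : w a = 1
    · have hz0 : ∀ j ∈ s, w j = 0 := by
        have h0 : ∑ j ∈ s, w j = 0 := by rw [hrest, hc]; ring
        intro j hj
        exact (Finset.sum_eq_zero_iff_of_nonneg
          (fun j hj => hw j (Finset.mem_cons_of_mem hj))).mp h0 j hj
      have e1 : ∑ j ∈ s, w j * z (x j) = 0 :=
        Finset.sum_eq_zero fun j hj => by rw [hz0 j hj, zero_mul]
      have e2 : (fun i => w a * x a i + ∑ j ∈ s, w j * x j i) = x a := by
        funext i
        rw [Finset.sum_eq_zero fun j hj => by rw [hz0 j hj, zero_mul], hc]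
        ring
      rw [e1, e2, hc]
      linarith
    · have hle1 : w a ≤ 1 := by linarith
      have h1c : 0 < 1 - w a := lt_of_le_of_ne (by linarith) (by
        intro h; exact hc (by linarith))
      have hne : (1 : ℝ) - w a ≠ 0 := ne_of_gt h1c
      set w' : ι → ℝ := fun j => w j / (1 - w a) with hw'def
      have hw'nn : ∀ j ∈ s, 0 ≤ w' j := fun j hj =>
        div_nonneg (hw j (Finset.mem_cons_of_mem hj)) (le_of_lt h1c)
      have hsum' : ∑ j ∈ s, w' j = 1 := by
        rw [hw'def, ← Finset.sum_div, hrest, div_self hne]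
      have hIH := IH w' x hw'nn hsum' (fun j hj i => hx j (Finset.mem_cons_of_mem hj) i)
      set Y : Fin n → ℝ := fun i => ∑ j ∈ s, w' j * x j i with hYdef
      have hYmem : ∀ i, Y i ∈ Set.Icc (0:ℝ) 1 := by
        intro i
        constructor
        · exact Finset.sum_nonneg fun j hj =>
            mul_nonneg (hw'nn j hj) (hx j (Finset.mem_cons_of_mem hj) i).1
        · calc ∑ j ∈ s, w' j * x j i ≤ ∑ j ∈ s, w' j * 1 :=
              Finset.sum_le_sum fun j hj =>
                mul_le_mul_of_nonneg_left (hx j (Finset.mem_cons_of_mem hj) i).2 (hw'nn j hj)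
            _ = 1 := by simpa using hsum'
      have hkey := hz (x a) Y (hx a (Finset.mem_cons_self a s)) hYmem (1 - w a)
        ⟨by linarith, by linarith⟩
      simp only [show (1:ℝ) - (1 - w a) = w a from by ring] at hkey
      have hback : ∀ j ∈ s, ∀ r : ℝ, (1 - w a) * (w' j * r) = w j * r := by
        intro j hj r
        rw [hw'def]
        field_simp
      have hzY : ∑ j ∈ s, w j * z (x j) ≤ (1 - w a) * z Y := by
        have step : ∑ j ∈ s, w j * z (x j) = (1 - w a) * ∑ j ∈ s, w' j * z (x j) := by
          rw [Finset.mul_sum]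
          exact (Finset.sum_congr rfl fun j hj => hback j hj _).symm
        rw [step]
        exact mul_le_mul_of_nonneg_left hIH (le_of_lt h1c)
      have harg : (fun i => w a * x a i + ∑ j ∈ s, w j * x j i)
          = (fun i => w a * x a i + (1 - w a) * Y i) := by
        funext i
        congr 1
        rw [hYdef]
        simp only
        rw [Finset.mul_sum]
        exact (Finset.sum_congr rfl fun j hj => hback j hj _).symm
      rw [harg]
      calc w a * z (x a) + ∑ j ∈ s, w j * z (x j)
          ≤ w a * z (x a) + (1 - w a) * z Y := by linarith
        _ ≤ z fun i => w a * x a i + (1 - w a) * Y i := hkey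

/-- The Kantorovich lifting preserves concave moduli of continuity of operators:
if `d(f t, f t') ≤ z (d(t₁,t₁'),…,d(tₙ,tₙ'))` with `z` concave, then the same bound
holds for the Kantorovich distances of the pushforward product distributions. -/
theorem kantorovich_concave_modulus {S : Type*} [Countable S]
    (D : PseudoMet S) (n : ℕ) (f : (Fin n → S) → S) (hf : Function.Injective f)
    (z : (Fin n → ℝ) → ℝ)
    (hz_range : ∀ x : Fin n → ℝ, (∀ i, x i ∈ Set.Icc (0:ℝ) 1) → z x ∈ Set.Icc (0:ℝ) 1)
    (hz_concave : ∀ x y : Fin n → ℝ, (∀ i, x i ∈ Set.Icc (0:ℝ) 1) →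
      (∀ i, y i ∈ Set.Icc (0:ℝ) 1) → ∀ l ∈ Set.Icc (0:ℝ) 1,
      (1 - l) * z x + l * z y ≤ z (fun i => (1 - l) * x i + l * y i))
    (hmod : ∀ t t' : Fin n → S,
      D.d (f t) (f t') ≤ z (fun i => D.d (t i) (t' i)))
    (π π' : Fin n → PDist S)
    (hfin : ∀ i, (Function.support (π i).p).Finite)
    (hfin' : ∀ i, (Function.support (π' i).p).Finite)
    (Fπ Fπ' : PDist S)
    (hFπ : ∀ t : Fin n → S, Fπ.p (f t) = ∏ i, (π i).p (t i))
    (hFπ0 : ∀ s, (∀ t : Fin n → S, s ≠ f t) → Fπ.p s = 0)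
    (hFπ' : ∀ t : Fin n → S, Fπ'.p (f t) = ∏ i, (π' i).p (t i))
    (hFπ'0 : ∀ s, (∀ t : Fin n → S, s ≠ f t) → Fπ'.p s = 0) :
    Kant D.d Fπ Fπ' ≤ z (fun i => Kant D.d (π i) (π' i)) := by
  classical
  choose ω hcpl hcost using fun i => kant_attained D (π i) (π' i) (hfin i) (hfin' i)
  set A : Fin n → Finset S := fun i => (hfin i).toFinset with hAdef
  set B : Fin n → Finset S := fun i => (hfin' i).toFinset with hBdef
  have hπ0 : ∀ i, ∀ s ∉ A i, (π i).p s = 0 := by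
    intro i s hs; by_contra h; exact hs ((hfin i).mem_toFinset.mpr h)
  have hπ'0 : ∀ i, ∀ t ∉ B i, (π' i).p t = 0 := by
    intro i t ht; by_contra h; exact ht ((hfin' i).mem_toFinset.mpr h)
  set W : Fin n → Finset (S × S) := fun i => A i ×ˢ B i with hWdef
  have hωW : ∀ i, ∀ q ∉ W i, (ω i).p q = 0 := by
    intro i q hq
    simp only [hWdef, Finset.mem_product, not_and_or] at hq
    apply coupling_zero (hcpl i)
    rcases hq with h | h
    · exact Or.inl (hπ0 i _ h)
    · exact Or.inr (hπ'0 i _ h)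
  have hωsum : ∀ i, ∑ q ∈ W i, (ω i).p q = 1 := fun i => by
    rw [← tsum_eq_sum (L := SummationFilter.unconditional _) (hωW i)]; exact (ω i).sum_one
  set Q : (Fin n → S × S) → ℝ := fun h => ∏ i, (ω i).p (h i) with hQdef
  have hQnn : ∀ h, 0 ≤ Q h := fun h => Finset.prod_nonneg fun i _ => (ω i).nonneg _
  have hQ0 : ∀ h ∉ Fintype.piFinset W, Q h = 0 := by
    intro h hh
    rw [Fintype.mem_piFinset] at hh
    push_neg at hh
    obtain ⟨i, hi⟩ := hh
    exact Finset.prod_eq_zero (Finset.mem_univ i) (hωW i _ hi)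
  have hQsum : ∑ h ∈ Fintype.piFinset W, Q h = 1 := by
    rw [← Finset.prod_univ_sum W fun i q => (ω i).p q]
    simp [hωsum]
  set g : (Fin n → S × S) → S × S :=
    fun h => (f fun i => (h i).1, f fun i => (h i).2) with hgdef
  have hg : Function.Injective g := by
    intro h h' e
    have e1 : (fun i => (h i).1) = fun i => (h' i).1 := hf (congrArg Prod.fst e)
    have e2 : (fun i => (h i).2) = fun i => (h' i).2 := hf (congrArg Prod.snd e)
    funext i
    exact Prod.ext (congrFun e1 i) (congrFun e2 i)
  set P : S × S → ℝ := Function.extend g Q fun _ => 0 with hPdef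
  have hPg : ∀ h, P (g h) = Q h := fun h => hg.extend_apply _ _ _
  have hPz : ∀ q : S × S, q ∉ Set.range g → P q = 0 := by
    intro q hq
    apply Function.extend_apply'
    rintro ⟨h, rfl⟩
    exact hq ⟨h, rfl⟩
  have hPnn : ∀ q, 0 ≤ P q := by
    intro q
    by_cases hq : q ∈ Set.range g
    · obtain ⟨h, rfl⟩ := hq
      rw [hPg]
      exact hQnn h
    · rw [hPz q hq]
  have hPsupp : Function.support P ⊆ Set.range g := by
    intro q hq
    by_contra hr
    exact hq (hPz q hr)
  have hPsum : ∑' q : S × S, P q = 1 := by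
    rw [← hg.tsum_eq hPsupp]
    calc ∑' h, P (g h) = ∑' h, Q h := tsum_congr hPg
      _ = ∑ h ∈ Fintype.piFinset W, Q h := tsum_eq_sum hQ0
      _ = 1 := hQsum
  have hmarg1 : ∀ u, ∑' v, P (u, v) = Fπ.p u := by
    intro u
    by_cases hu : ∃ t : Fin n → S, f t = u
    · obtain ⟨t, rfl⟩ := hu
      have hzv : ∀ v ∉ Set.range f, P (f t, v) = 0 := by
        intro v hv
        apply hPz
        rintro ⟨h, hh⟩
        exact hv ⟨_, congrArg Prod.snd hh⟩
      have hsupp2 : Function.support (fun v => P (f t, v)) ⊆ Set.range f := by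
        intro v hv; by_contra hr; exact hv (hzv v hr)
      rw [← hf.tsum_eq hsupp2]
      have hPt : ∀ t' : Fin n → S, P (f t, f t') = ∏ i, (ω i).p (t i, t' i) := by
        intro t'
        have e3 : g (fun i => (t i, t' i)) = (f t, f t') := rfl
        rw [← e3, hPg]
      calc ∑' t' : Fin n → S, P (f t, f t')
          = ∑' t' : Fin n → S, ∏ i, (ω i).p (t i, t' i) := tsum_congr hPt
        _ = ∑ t' ∈ Fintype.piFinset B, ∏ i, (ω i).p (t i, t' i) := by
            apply tsum_eq_sum
            intro t' ht'
            rw [Fintype.mem_piFinset] at ht'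
            push_neg at ht'
            obtain ⟨i, hi⟩ := ht'
            exact Finset.prod_eq_zero (Finset.mem_univ i)
              (coupling_zero (hcpl i) (Or.inr (hπ'0 i _ hi)))
        _ = ∏ i, ∑ b ∈ B i, (ω i).p (t i, b) :=
            (Finset.prod_univ_sum B fun i b => (ω i).p (t i, b)).symm
        _ = ∏ i, (π i).p (t i) := by
            apply Finset.prod_congr rfl
            intro i _
            rw [← tsum_eq_sum (L := SummationFilter.unconditional _) (fun b hb => coupling_zero (hcpl i) (Or.inr (hπ'0 i b hb)))]
            exact (hcpl i).1 (t i)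
        _ = Fπ.p (f t) := (hFπ t).symm
    · push_neg at hu
      have hall : ∀ v, P (u, v) = 0 := by
        intro v
        apply hPz
        rintro ⟨h, hh⟩
        exact hu _ (congrArg Prod.fst hh)
      simp only [hall, tsum_zero]
      exact (hFπ0 u fun t => Ne.symm (hu t)).symm
  have hmarg2 : ∀ v, ∑' u, P (u, v) = Fπ'.p v := by
    intro v
    by_cases hv : ∃ t' : Fin n → S, f t' = v
    · obtain ⟨t', rfl⟩ := hv
      have hzu : ∀ u ∉ Set.range f, P (u, f t') = 0 := by
        intro u hu
        apply hPz
        rintro ⟨h, hh⟩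
        exact hu ⟨_, congrArg Prod.fst hh⟩
      have hsupp2 : Function.support (fun u => P (u, f t')) ⊆ Set.range f := by
        intro u hu; by_contra hr; exact hu (hzu u hr)
      rw [← hf.tsum_eq hsupp2]
      have hPt : ∀ t : Fin n → S, P (f t, f t') = ∏ i, (ω i).p (t i, t' i) := by
        intro t
        have e3 : g (fun i => (t i, t' i)) = (f t, f t') := rfl
        rw [← e3, hPg]
      calc ∑' t : Fin n → S, P (f t, f t')
          = ∑' t : Fin n → S, ∏ i, (ω i).p (t i, t' i) := tsum_congr hPt
        _ = ∑ t ∈ Fintype.piFinset A, ∏ i, (ω i).p (t i, t' i) := by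
            apply tsum_eq_sum
            intro t ht
            rw [Fintype.mem_piFinset] at ht
            push_neg at ht
            obtain ⟨i, hi⟩ := ht
            exact Finset.prod_eq_zero (Finset.mem_univ i)
              (coupling_zero (hcpl i) (Or.inl (hπ0 i _ hi)))
        _ = ∏ i, ∑ a ∈ A i, (ω i).p (a, t' i) :=
            (Finset.prod_univ_sum A fun i a => (ω i).p (a, t' i)).symm
        _ = ∏ i, (π' i).p (t' i) := by
            apply Finset.prod_congr rfl
            intro i _
            have hz : ∀ a ∉ A i, (fun a => (ω i).p (a, t' i)) a = 0 := fun a ha =>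
              coupling_zero (hcpl i) (Or.inl (hπ0 i a ha))
            rw [← tsum_eq_sum (L := SummationFilter.unconditional _) hz]
            exact (hcpl i).2 (t' i)
        _ = Fπ'.p (f t') := (hFπ' t').symm
    · push_neg at hv
      have hall : ∀ u, P (u, v) = 0 := by
        intro u
        apply hPz
        rintro ⟨h, hh⟩
        exact hv _ (congrArg Prod.snd hh)
      simp only [hall, tsum_zero]
      exact (hFπ'0 v fun t => Ne.symm (hv t)).symm
  have hΩcpl : IsCoupling ⟨P, hPnn, hPsum⟩ Fπ Fπ' := ⟨hmarg1, hmarg2⟩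
  have hzcost : ∀ q : S × S, q ∉ Set.range g → D.d q.1 q.2 * P q = 0 := fun q hq => by
    rw [hPz q hq, mul_zero]
  have hsupp3 : Function.support (fun q : S × S => D.d q.1 q.2 * P q) ⊆ Set.range g := by
    intro q hq
    by_contra hr
    exact hq (hzcost q hr)
  have hcostΩ : (∑' q : S × S, D.d q.1 q.2 * P q)
      = ∑ h ∈ Fintype.piFinset W, D.d (g h).1 (g h).2 * Q h := by
    calc (∑' q : S × S, D.d q.1 q.2 * P q)
        = ∑' h, D.d (g h).1 (g h).2 * P (g h) := (hg.tsum_eq hsupp3).symm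
      _ = ∑' h, D.d (g h).1 (g h).2 * Q h := tsum_congr fun h => by rw [hPg]
      _ = ∑ h ∈ Fintype.piFinset W, D.d (g h).1 (g h).2 * Q h := by
          apply tsum_eq_sum
          intro h hh
          rw [hQ0 h hh, mul_zero]
  have hjensen := jensen z hz_concave (Fintype.piFinset W) Q
    (fun h => fun i => D.d (h i).1 (h i).2)
    (fun h _ => hQnn h) hQsum (fun h _ i => ⟨D.nonneg _ _, D.le_one _ _⟩)
  have h1 : Kant D.d Fπ Fπ' ≤ ∑' q : S × S, D.d q.1 q.2 * P q := by
    apply csInf_le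
    · refine ⟨0, ?_⟩
      rintro r ⟨ω', _, rfl⟩
      exact tsum_nonneg fun q => mul_nonneg (D.nonneg _ _) (ω'.nonneg _)
    · exact ⟨⟨P, hPnn, hPsum⟩, hΩcpl, rfl⟩
  have h2 : ∑ h ∈ Fintype.piFinset W, D.d (g h).1 (g h).2 * Q h
      ≤ ∑ h ∈ Fintype.piFinset W, Q h * z (fun i => D.d (h i).1 (h i).2) := by
    apply Finset.sum_le_sum
    intro h _
    rw [mul_comm]
    apply mul_le_mul_of_nonneg_left _ (hQnn h)
    exact hmod _ _
  have h3 : ∀ i, ∑ h ∈ Fintype.piFinset W, Q h * D.d (h i).1 (h i).2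
      = Kant D.d (π i) (π' i) := by
    intro i
    have e1 : ∀ h : Fin n → S × S, Q h * D.d (h i).1 (h i).2
        = ∏ k, ((ω k).p (h k) * if k = i then D.d (h k).1 (h k).2 else 1) := by
      intro h
      rw [Finset.prod_mul_distrib, Finset.prod_ite_eq' Finset.univ i
        fun k => D.d (h k).1 (h k).2]
      simp [hQdef]
    calc ∑ h ∈ Fintype.piFinset W, Q h * D.d (h i).1 (h i).2
        = ∑ h ∈ Fintype.piFinset W,
            ∏ k, ((ω k).p (h k) * if k = i then D.d (h k).1 (h k).2 else 1) :=
          Finset.sum_congr rfl fun h _ => e1 h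
      _ = ∏ k, ∑ q ∈ W k, ((ω k).p q * if k = i then D.d q.1 q.2 else 1) :=
          (Finset.prod_univ_sum W fun k q =>
            (ω k).p q * if k = i then D.d q.1 q.2 else 1).symm
      _ = ∏ k, (if k = i then Kant D.d (π i) (π' i) else 1) := by
          apply Finset.prod_congr rfl
          intro k _
          by_cases hk : k = i
          · subst hk
            simp only [if_pos rfl]
            rw [← hcost k, tsum_eq_sum (s := W k)
              (fun q hq => by rw [hωW k q hq, mul_zero])]
            exact Finset.sum_congr rfl fun q _ => mul_comm _ _
          · simp only [if_neg hk, mul_one]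
            exact hωsum k
      _ = Kant D.d (π i) (π' i) := by
          rw [Finset.prod_ite_eq' Finset.univ i fun _ => Kant D.d (π i) (π' i)]
          simp
  calc Kant D.d Fπ Fπ' ≤ ∑' q : S × S, D.d q.1 q.2 * P q := h1
    _ = ∑ h ∈ Fintype.piFinset W, D.d (g h).1 (g h).2 * Q h := hcostΩ
    _ ≤ ∑ h ∈ Fintype.piFinset W, Q h * z (fun i => D.d (h i).1 (h i).2) := h2
    _ ≤ z (fun i => ∑ h ∈ Fintype.piFinset W, Q h * D.d (h i).1 (h i).2) := hjensen
    _ = z (fun i => Kant D.d (π i) (π' i)) := by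
        congr 1
        funext i
        exact h3 i
end

section
/- For p ∈ (0,1], λ ∈ (0,1] (including λ = 1), and ε ∈ [0,λ], the bound ε/(1 − (1−p)(λ² − λε)) ≤ ε/(1 − (1−p)λ²) holds, and since (1−p)λ² < 1, the map ε ↦ ε/(1 − (1−p)(λ² − λε)) is Lipschitz continuous on [0,λ] with constant 1/(1 − (1−p)λ²). -/
/-- The probabilistic bang distance bound is at most `ε/(1−(1−p)λ²)`; since
`(1−p)λ² < 1`, the map `ε ↦ ε/(1−(1−p)(λ²−λε))` is Lipschitz on `[0,λ]`
with constant `1/(1−(1−p)λ²)`. -/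
theorem prob_bang_lipschitz (p l : ℝ) (hp0 : 0 < p) (hp1 : p ≤ 1)
    (hl0 : 0 < l) (hl1 : l ≤ 1) :
    (1 - p) * l ^ 2 < 1 ∧
    (∀ e : ℝ, 0 ≤ e → e ≤ l →
        e / (1 - (1 - p) * (l ^ 2 - l * e)) ≤ e / (1 - (1 - p) * l ^ 2)) ∧
    (∀ e1 e2 : ℝ, 0 ≤ e1 → e1 ≤ l → 0 ≤ e2 → e2 ≤ l →
        |e1 / (1 - (1 - p) * (l ^ 2 - l * e1)) - e2 / (1 - (1 - p) * (l ^ 2 - l * e2))|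
          ≤ (1 / (1 - (1 - p) * l ^ 2)) * |e1 - e2|) := by
  have hc : 0 < 1 - (1 - p) * l ^ 2 := by nlinarith [sq_nonneg l, sq_nonneg (1 - l)]
  have hD : ∀ e : ℝ, 0 ≤ e → 1 - (1 - p) * l ^ 2 ≤ 1 - (1 - p) * (l ^ 2 - l * e) := by
    intro e he
    nlinarith [mul_nonneg (mul_nonneg (sub_nonneg.mpr hp1) hl0.le) he]
  refine ⟨by linarith, ?_, ?_⟩
  · intro e he0 hel
    have h1 := hD e he0
    exact div_le_div_of_nonneg_left he0 hc h1 |>.trans_eq rfl |> fun h => h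
  · intro e1 e2 he10 he1l he20 he2l
    have hD1 : 0 < 1 - (1 - p) * (l ^ 2 - l * e1) := lt_of_lt_of_le hc (hD e1 he10)
    have hD2 : 0 < 1 - (1 - p) * (l ^ 2 - l * e2) := lt_of_lt_of_le hc (hD e2 he20)
    have key : e1 / (1 - (1 - p) * (l ^ 2 - l * e1)) - e2 / (1 - (1 - p) * (l ^ 2 - l * e2))
        = ((1 - (1 - p) * l ^ 2) * (e1 - e2)) /
          ((1 - (1 - p) * (l ^ 2 - l * e1)) * (1 - (1 - p) * (l ^ 2 - l * e2))) := by
      rw [div_sub_div _ _ hD1.ne' hD2.ne']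
      congr 1
      ring
    rw [key, abs_div, abs_mul, abs_of_pos hc,
      abs_of_pos (mul_pos hD1 hD2), one_div, mul_comm]
    rw [div_le_iff₀ (mul_pos hD1 hD2)]
    have hle : (1 - (1 - p) * l ^ 2) * (1 - (1 - p) * l ^ 2)
        ≤ (1 - (1 - p) * (l ^ 2 - l * e1)) * (1 - (1 - p) * (l ^ 2 - l * e2)) :=
      mul_le_mul (hD e1 he10) (hD e2 he20) hc.le (le_trans hc.le (hD e1 he10))
    calc |e1 - e2| * (1 - (1 - p) * l ^ 2)
        = (1 - (1 - p) * l ^ 2)⁻¹ * |e1 - e2| *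
          ((1 - (1 - p) * l ^ 2) * (1 - (1 - p) * l ^ 2)) := by
          field_simp
      _ ≤ |e1 - e2| * (1 - (1 - p) * l ^ 2)⁻¹ *
          ((1 - (1 - p) * (l ^ 2 - l * e1)) * (1 - (1 - p) * (l ^ 2 - l * e2))) := by
          rw [mul_comm (1 - (1 - p) * l ^ 2)⁻¹]
          exact mul_le_mul_of_nonneg_left hle
            (mul_nonneg (abs_nonneg _) (inv_nonneg.mpr hc.le))
      _ = (1 - (1 - p) * l ^ 2)⁻¹ * |e1 - e2| *
          ((1 - (1 - p) * (l ^ 2 - l * e1)) * (1 - (1 - p) * (l ^ 2 - l * e2))) := by ring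
end

section
/- For λ ∈ (0,1] and ε₁, ε₂ ∈ [0,λ], the asynchronous parallel composition bound d^a = max(ε₁ + λ²(1 − ε₁/λ)·ε₂, ε₂ + λ²(1 − ε₂/λ)·ε₁) satisfies d^a ≤ d^s where d^s = ε₁ + (1 − ε₁/λ)·ε₂, and also d^a ≤ ε₁ + ε₂. -/
/-- The asynchronous parallel composition distance bound `dᵃ` is at most the
synchronous bound `dˢ`, and at most `ε₁ + ε₂`. -/
theorem async_le_sync_bound (l e1 e2 : ℝ) (hl0 : 0 < l) (hl1 : l ≤ 1)
    (he1 : e1 ∈ Set.Icc 0 l) (he2 : e2 ∈ Set.Icc 0 l) :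
    (max (e1 + l ^ 2 * (1 - e1 / l) * e2) (e2 + l ^ 2 * (1 - e2 / l) * e1)
        ≤ e1 + (1 - e1 / l) * e2) ∧
    (max (e1 + l ^ 2 * (1 - e1 / l) * e2) (e2 + l ^ 2 * (1 - e2 / l) * e1)
        ≤ e1 + e2) := by
  obtain ⟨h10, h1l⟩ := he1
  obtain ⟨h20, h2l⟩ := he2
  have d1 : e1 / l ≤ 1 := (div_le_one hl0).mpr h1l
  have d2 : e2 / l ≤ 1 := (div_le_one hl0).mpr h2l
  have d10 : 0 ≤ e1 / l := div_nonneg h10 hl0.le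
  have d20 : 0 ≤ e2 / l := div_nonneg h20 hl0.le
  have hsym : e1 + (1 - e1 / l) * e2 = e2 + (1 - e2 / l) * e1 := by
    field_simp; ring
  have hl2 : l ^ 2 ≤ 1 := by nlinarith
  have hA : e1 + l ^ 2 * (1 - e1 / l) * e2 ≤ e1 + (1 - e1 / l) * e2 := by
    nlinarith [mul_nonneg (sub_nonneg.mpr d1) h20, hl2]
  have hB : e2 + l ^ 2 * (1 - e2 / l) * e1 ≤ e2 + (1 - e2 / l) * e1 := by
    nlinarith [mul_nonneg (sub_nonneg.mpr d2) h10, hl2]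
  have hmax : max (e1 + l ^ 2 * (1 - e1 / l) * e2) (e2 + l ^ 2 * (1 - e2 / l) * e1)
      ≤ e1 + (1 - e1 / l) * e2 := by
    apply max_le hA
    rw [hsym]; exact hB
  refine ⟨hmax, hmax.trans ?_⟩
  nlinarith [mul_nonneg d10 h20]
end
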